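/- Let t ∈ (0, 1/β] and let x, w, c ∈ ℝ^n. If ⟨x⁺ − x, w − x⟩ ≤ 0 and ⟨x⁺ − x, x − c⟩ ≥ 0, then F(x⁺) ≤ F(w) − (t/2)·‖G_t(x)‖² and ‖x^{++} − c‖² ≥ ‖G_t(x)‖²/α². -/

import Mathlib

/-!
Adding the descent bound `f x⁺ ≤ f x + ⟪∇f x, x⁺ - x⟫ + (β/2)‖x⁺ - x‖²` (with `tβ ≤ 1`), the
first-order convexity bound `f x ≤ f w - ⟪∇f x, w - x⟫` and the variational inequality of the
prox step at `w` gives the proximal-gradient inequality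
`t F(x⁺) ≤ t F(w) + ⟪x⁺ - x, w - x⟫ - ‖x - x⁺‖²/2`; the first hypothesis kills the inner product.
For the second claim, `x^{++} - c = (x - c) - G_t(x)/α` and `⟪x - c, G_t(x)⟫ ≤ 0` by the second
hypothesis, so expanding the square leaves at least `‖G_t(x)/α‖²`.
-/

open Set Filter Topology
open scoped RealInnerProductSpace Gradient

section

variable {E : Type*} [NormedAddCommGroup E] [InnerProductSpace ℝ E]

lemma sq_norm_le_sq_norm_sub_of_inner_nonpos {u v : E} (h : ⟪v, u⟫ ≤ 0) :
    ‖u‖ ^ 2 ≤ ‖v - u‖ ^ 2 := by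
  rw [norm_sub_sq_real]
  nlinarith [sq_nonneg ‖v‖]

lemma ConvexOn.add_inner_sub_le_of_isMinOn {φ : E → ℝ} (hφ : ConvexOn ℝ univ φ) {y p : E}
    (hp : IsMinOn (fun z => φ z + ‖z - y‖ ^ 2 / 2) univ p) (z : E) :
    φ p + ⟪y - p, z - p⟫ ≤ φ z := by
  -- Test minimality against `p + l • (z - p)`: the quadratic term is `O(l²)`, so it
  -- disappears after dividing by `l` and letting `l → 0`.
  have hstep : ∀ l ∈ Ioo (0 : ℝ) 1, φ p + ⟪y - p, z - p⟫ ≤ φ z + l * (‖z - p‖ ^ 2 / 2) := by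
    rintro l ⟨hl0, hl1⟩
    have hq : p + l • (z - p) = (1 - l) • p + l • z := by
      rw [smul_sub, sub_smul, one_smul]; abel
    have hmin : φ p + ‖p - y‖ ^ 2 / 2 ≤ φ (p + l • (z - p)) + ‖p + l • (z - p) - y‖ ^ 2 / 2 :=
      hp (mem_univ _)
    have hcvx : φ (p + l • (z - p)) ≤ (1 - l) * φ p + l * φ z := by
      simpa [hq] using hφ.2 (mem_univ p) (mem_univ z) (by linarith) hl0.le (by ring)
    have hsq : ‖p + l • (z - p) - y‖ ^ 2 =
        ‖p - y‖ ^ 2 - 2 * l * ⟪y - p, z - p⟫ + l ^ 2 * ‖z - p‖ ^ 2 := by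
      rw [show p + l • (z - p) - y = l • (z - p) - (y - p) by abel, norm_sub_sq_real,
        real_inner_smul_left, norm_smul, Real.norm_eq_abs, mul_pow, sq_abs, norm_sub_rev p y,
        real_inner_comm (y - p)]
      ring
    have : l * (φ p + ⟪y - p, z - p⟫) ≤ l * (φ z + l * (‖z - p‖ ^ 2 / 2)) := by
      nlinarith
    exact le_of_mul_le_mul_left this hl0
  have hlim : Tendsto (fun l : ℝ => φ z + l * (‖z - p‖ ^ 2 / 2)) (𝓝[>] 0) (𝓝 (φ z)) :=
    ((continuous_const.add (continuous_id.mul continuous_const)).tendsto' 0 _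
      (by simp)).mono_left nhdsWithin_le_nhds
  exact ge_of_tendsto hlim (eventually_of_mem (Ioo_mem_nhdsGT one_pos) hstep)

variable [CompleteSpace E] {f : E → ℝ}

lemma HasGradientAt.hasDerivAt_comp_add_smul {g x v : E} {s : ℝ}
    (hg : HasGradientAt f g (x + s • v)) :
    HasDerivAt (fun s : ℝ => f (x + s • v)) ⟪g, v⟫ s := by
  have hline : HasDerivAt (fun s : ℝ => x + s • v) v s := by
    simpa using ((hasDerivAt_id s).smul_const v).const_add x
  exact (hasGradientAt_iff_hasFDerivAt.mp hg).comp_hasDerivAt s hline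

lemma ConvexOn.inner_gradient_le_sub (hc : ConvexOn ℝ univ f) {x : E}
    (hf : DifferentiableAt ℝ f x) (y : E) :
    ⟪∇ f x, y - x⟫ ≤ f y - f x := by
  have hline : ConvexOn ℝ univ (fun s : ℝ => f (x + s • (y - x))) := by
    simpa [Function.comp_def, AffineMap.lineMap_apply, add_comm] using
      hc.comp_affineMap (AffineMap.lineMap x y)
  have hd : HasDerivAt (fun s : ℝ => f (x + s • (y - x))) ⟪∇ f x, y - x⟫ 0 :=
    HasGradientAt.hasDerivAt_comp_add_smul (by simpa using hf.hasGradientAt)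
  simpa [slope_def_field] using
    hline.le_slope_of_hasDerivAt (mem_univ 0) (mem_univ 1) one_pos hd

lemma le_add_inner_gradient_add_of_lipschitzWith {K : NNReal} (hf : Differentiable ℝ f)
    (hlip : LipschitzWith K (∇ f)) (x v : E) :
    f (x + v) ≤ f x + ⟪∇ f x, v⟫ + K / 2 * ‖v‖ ^ 2 := by
  -- `ψ` is `f` minus its quadratic model along the segment; the Lipschitz bound makes it antitone.
  set ψ : ℝ → ℝ := fun s => f (x + s • v) - s * ⟪∇ f x, v⟫ - s ^ 2 * (K / 2 * ‖v‖ ^ 2)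
  have hψ : ∀ s : ℝ, HasDerivAt ψ (⟪∇ f (x + s • v), v⟫ - ⟪∇ f x, v⟫ - s * (K * ‖v‖ ^ 2)) s := by
    intro s
    have hquad := (hasDerivAt_pow 2 s).mul_const (K / 2 * ‖v‖ ^ 2)
    refine ((((hf _).hasGradientAt.hasDerivAt_comp_add_smul).sub
      ((hasDerivAt_id s).mul_const ⟪∇ f x, v⟫)).sub hquad).congr_deriv ?_
    simp only [one_mul, Nat.cast_ofNat, Nat.add_one_sub_one, pow_one]
    ring
  have hψ' : ∀ s ∈ interior (Icc (0 : ℝ) 1),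
      ⟪∇ f (x + s • v), v⟫ - ⟪∇ f x, v⟫ - s * (K * ‖v‖ ^ 2) ≤ 0 := by
    intro s hs
    rw [interior_Icc] at hs
    have hgrad : ‖∇ f (x + s • v) - ∇ f x‖ ≤ K * (s * ‖v‖) := by
      simpa [norm_smul, abs_of_pos hs.1] using hlip.norm_sub_le (x + s • v) x
    refine sub_nonpos.mpr ?_
    calc ⟪∇ f (x + s • v), v⟫ - ⟪∇ f x, v⟫ = ⟪∇ f (x + s • v) - ∇ f x, v⟫ :=
          (inner_sub_left _ _ _).symm
      _ ≤ ‖∇ f (x + s • v) - ∇ f x‖ * ‖v‖ := real_inner_le_norm _ _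
      _ ≤ K * (s * ‖v‖) * ‖v‖ := by gcongr
      _ = s * (K * ‖v‖ ^ 2) := by ring
  have hanti : AntitoneOn ψ (Icc 0 1) :=
    antitoneOn_of_hasDerivWithinAt_nonpos (convex_Icc 0 1)
      (fun s _ => (hψ s).continuousAt.continuousWithinAt)
      (fun s _ => (hψ s).hasDerivWithinAt) hψ'
  have := hanti (left_mem_Icc.mpr zero_le_one) (right_mem_Icc.mpr zero_le_one) zero_le_one
  simp only [ψ, one_smul, zero_smul, add_zero, one_mul, zero_mul, one_pow, sub_zero,
    ne_eq, OfNat.ofNat_ne_zero, not_false_eq_true, zero_pow] at this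
  linarith

lemma proxGrad_fundamental_ineq {h : E → ℝ} {K : NNReal} {t : ℝ} (hfc : ConvexOn ℝ univ f)
    (hf : Differentiable ℝ f) (hlip : LipschitzWith K (∇ f)) (hh : ConvexOn ℝ univ h)
    (ht : 0 < t) (htK : t * K ≤ 1) {x p : E}
    (hp : IsMinOn (fun z => t * h z + ‖z - (x - t • ∇ f x)‖ ^ 2 / 2) univ p) (w : E) :
    t * (f p + h p) ≤ t * (f w + h w) + ⟪p - x, w - x⟫ - ‖x - p‖ ^ 2 / 2 := by
  have hdesc := le_add_inner_gradient_add_of_lipschitzWith hf hlip x (p - x)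
  rw [add_sub_cancel, norm_sub_rev] at hdesc
  have hcvx := hfc.inner_gradient_le_sub (hf x) w
  have hprox := (hh.smul ht.le).add_inner_sub_le_of_isMinOn hp w
  have hsplit : ⟪x - t • ∇ f x - p, w - p⟫ =
      ‖x - p‖ ^ 2 - ⟪p - x, w - x⟫ - t * ⟪∇ f x, w - x⟫ + t * ⟪∇ f x, p - x⟫ := by
    rw [show x - t • ∇ f x - p = (x - p) - t • ∇ f x by abel,
      show w - p = (w - x) + (x - p) by abel, inner_sub_left, inner_add_right, inner_add_right,
      real_inner_self_eq_norm_sq, real_inner_smul_left, real_inner_smul_left, ← neg_sub p x,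
      inner_neg_left, inner_neg_right, norm_neg]
    ring
  have hK : t * (K / 2 * ‖x - p‖ ^ 2) ≤ ‖x - p‖ ^ 2 / 2 := by
    nlinarith [sq_nonneg ‖x - p‖]
  simp only [smul_eq_mul, hsplit] at hprox
  nlinarith

end

theorem stmt_5_general (n : ℕ) (α β t : ℝ) (hα : 0 < α)
    (f h : EuclideanSpace ℝ (Fin n) → ℝ)
    (hsc : ConvexOn ℝ Set.univ (fun z => f z - α / 2 * ‖z‖ ^ 2))
    (hf : Differentiable ℝ f)
    (hlip : LipschitzWith β.toNNReal (fun z => gradient f z))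
    (hconv : ConvexOn ℝ Set.univ h)
    (ht : t ∈ Set.Ioc (0 : ℝ) (1 / β))
    (x w c xplus : EuclideanSpace ℝ (Fin n))
    (hprox : IsMinOn (fun z => t * h z + ‖z - (x - t • gradient f x)‖ ^ 2 / 2)
      Set.univ xplus)
    (h1 : ⟪xplus - x, w - x⟫ ≤ 0)
    (h2 : ⟪xplus - x, x - c⟫ ≥ 0) :
    f xplus + h xplus ≤ (f w + h w) - t / 2 * ‖t⁻¹ • (x - xplus)‖ ^ 2
      ∧ ‖(x - α⁻¹ • (t⁻¹ • (x - xplus))) - c‖ ^ 2 ≥ ‖t⁻¹ • (x - xplus)‖ ^ 2 / α ^ 2 := by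
  obtain ⟨ht0, htβ⟩ := ht
  have hβ : 0 < β := one_div_pos.mp (ht0.trans_le htβ)
  have htK : t * β.toNNReal ≤ 1 := by
    rwa [Real.coe_toNNReal _ hβ.le, ← le_div_iff₀ hβ]
  have hfc : ConvexOn ℝ univ f :=
    strongConvexOn_zero.mp ((strongConvexOn_iff_convex.mpr hsc).mono hα.le)
  have hG : ‖t⁻¹ • (x - xplus)‖ ^ 2 = ‖x - xplus‖ ^ 2 / t ^ 2 := by
    rw [norm_smul, mul_pow, Real.norm_eq_abs, sq_abs]; field_simp
  constructor
  · have key := proxGrad_fundamental_ineq hfc hf hlip hconv ht0 htK hprox w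
    rw [hG, ← mul_le_mul_iff_right₀ ht0]
    calc t * (f xplus + h xplus) ≤ t * (f w + h w) - ‖x - xplus‖ ^ 2 / 2 := by linarith
      _ = t * (f w + h w - t / 2 * (‖x - xplus‖ ^ 2 / t ^ 2)) := by field_simp
  · have hinner : ⟪x - c, α⁻¹ • t⁻¹ • (x - xplus)⟫ ≤ 0 := by
      rw [real_inner_smul_right, real_inner_smul_right, ← neg_sub xplus x, inner_neg_right,
        real_inner_comm]
      have := mul_nonneg (inv_nonneg.2 hα.le) (mul_nonneg (inv_nonneg.2 ht0.le) h2)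
      linarith
    calc ‖t⁻¹ • (x - xplus)‖ ^ 2 / α ^ 2 = ‖α⁻¹ • t⁻¹ • (x - xplus)‖ ^ 2 := by
          rw [norm_smul _ (t⁻¹ • _), mul_pow, Real.norm_eq_abs, sq_abs]; field_simp
      _ ≤ ‖(x - c) - α⁻¹ • t⁻¹ • (x - xplus)‖ ^ 2 := sq_norm_le_sq_norm_sub_of_inner_nonpos hinner
      _ = ‖(x - α⁻¹ • (t⁻¹ • (x - xplus))) - c‖ ^ 2 := by rw [sub_right_comm]

/-- Lemma 3.2: if `⟨x⁺ − x, w − x⟩ ≤ 0` and `⟨x⁺ − x, x − c⟩ ≥ 0`, then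
`F(x⁺) ≤ F(w) − (t/2)‖G_t(x)‖²` and `‖x^{++} − c‖² ≥ ‖G_t(x)‖²/α²`, where
`xplus = Prox_{th}(x − t∇f(x))`, `G_t(x) = t⁻¹ • (x - xplus)`,
`x^{++} = x − G_t(x)/α` and `F = f + h`. -/
theorem stmt_5 (n : ℕ) (α β t : ℝ) (hα : 0 < α) (hαβ : α ≤ β)
    (f h : EuclideanSpace ℝ (Fin n) → ℝ)
    (hsc : ConvexOn ℝ Set.univ (fun z => f z - α / 2 * ‖z‖ ^ 2))
    (hf : Differentiable ℝ f)
    (hlip : LipschitzWith β.toNNReal (fun z => gradient f z))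
    (hconv : ConvexOn ℝ Set.univ h) (hlsc : LowerSemicontinuous h)
    (ht : t ∈ Set.Ioc (0 : ℝ) (1 / β))
    (x w c xplus : EuclideanSpace ℝ (Fin n))
    (hprox : IsMinOn (fun z => t * h z + ‖z - (x - t • gradient f x)‖ ^ 2 / 2)
      Set.univ xplus)
    (h1 : ⟪xplus - x, w - x⟫ ≤ 0)
    (h2 : ⟪xplus - x, x - c⟫ ≥ 0) :
    f xplus + h xplus ≤ (f w + h w) - t / 2 * ‖t⁻¹ • (x - xplus)‖ ^ 2
      ∧ ‖(x - α⁻¹ • (t⁻¹ • (x - xplus))) - c‖ ^ 2 ≥ ‖t⁻¹ • (x - xplus)‖ ^ 2 / α ^ 2 :=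
  stmt_5_general n α β t hα f h hsc hf hlip hconv ht x w c xplus hprox h1 h2
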